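/- Let E be a real inner product space, let V : E → ℝ be differentiable with L-Lipschitz gradient, let σ > 0, η ≥ 0, u ∈ E, and θ ∈ E with h := ∇V(θ) ≠ 0. Define the HALyPO direction d* := u − (max(0, (⟪h, u⟫ + σ·V(θ))/‖h‖²)) • h and the update θ' := θ + η • d*. Then V(θ') ≤ V(θ) − η·σ·V(θ) + (L·η²/2)·‖d*‖². -/

import Mathlib

/-!
The coefficient of `h = ∇V(θ)` in `d*` is at least `(⟪h, u⟫ + σ V(θ)) / ‖h‖²`, so
`⟪h, d*⟫ ≤ -σ V(θ)`. The descent lemma for a function with `L`-Lipschitz gradient,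
`V(θ + η d) ≤ V(θ) + η ⟪h, d⟫ + (L η² / 2) ‖d‖²`, then gives the bound for `η ≥ 0`.
-/

open RealInnerProductSpace

section

variable {E : Type*} [NormedAddCommGroup E] [InnerProductSpace ℝ E]

theorem hasDerivAt_comp_add_smul {V : E → ℝ} {V' : E → E}
    (hdiff : ∀ z, HasFDerivAt V (InnerProductSpace.toDualMap ℝ E (V' z)) z) (x d : E) (t : ℝ) :
    HasDerivAt (fun s : ℝ => V (x + s • d)) ⟪V' (x + t • d), d⟫ t := by
  have hline : HasDerivAt (fun s : ℝ => x + s • d) d t := by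
    simpa using ((hasDerivAt_id t).smul_const d).const_add x
  have h := (hdiff (x + t • d)).comp_hasDerivAt t hline
  simp only [InnerProductSpace.toDualMap_apply_apply] at h
  exact h

/-- `t ↦ V (x + t • d) - t ⟪V' x, d⟫ - L t² ‖d‖² / 2` is antitone on `[0, ∞)`: its derivative
is nonpositive there by Cauchy–Schwarz and the Lipschitz bound at `x`. -/
theorem le_add_inner_add_half_mul_norm_sq {V : E → ℝ} {V' : E → E} {L : ℝ}
    (hdiff : ∀ z, HasFDerivAt V (InnerProductSpace.toDualMap ℝ E (V' z)) z) {x : E}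
    (hlip : ∀ z, ‖V' z - V' x‖ ≤ L * ‖z - x‖) (y : E) :
    V y ≤ V x + ⟪V' x, y - x⟫ + L / 2 * ‖y - x‖ ^ 2 := by
  set d := y - x
  set g : ℝ → ℝ := fun t => V (x + t • d) - t * ⟪V' x, d⟫ - L / 2 * t ^ 2 * ‖d‖ ^ 2
  have hg : ∀ t, HasDerivAt g (⟪V' (x + t • d), d⟫ - ⟪V' x, d⟫ - L * t * ‖d‖ ^ 2) t := by
    intro t
    have := (((hasDerivAt_comp_add_smul hdiff x d t).sub
      ((hasDerivAt_id t).mul_const ⟪V' x, d⟫)).sub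
      (((hasDerivAt_pow 2 t).const_mul (L / 2)).mul_const (‖d‖ ^ 2)))
    exact this.congr_deriv
      (by simp only [one_mul, Nat.cast_ofNat, Nat.add_one_sub_one, pow_one]; ring)
  have hg'_nonpos : ∀ t ∈ interior (Set.Ici (0 : ℝ)),
      ⟪V' (x + t • d), d⟫ - ⟪V' x, d⟫ - L * t * ‖d‖ ^ 2 ≤ 0 := by
    intro t ht
    rw [interior_Ici, Set.mem_Ioi] at ht
    have hstep : ‖V' (x + t • d) - V' x‖ ≤ L * t * ‖d‖ := by
      simpa [norm_smul, abs_of_pos ht, mul_assoc] using hlip (x + t • d)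
    calc ⟪V' (x + t • d), d⟫ - ⟪V' x, d⟫ - L * t * ‖d‖ ^ 2
        = ⟪V' (x + t • d) - V' x, d⟫ - L * t * ‖d‖ ^ 2 := by rw [inner_sub_left]
      _ ≤ ‖V' (x + t • d) - V' x‖ * ‖d‖ - L * t * ‖d‖ * ‖d‖ := by
          rw [sq, ← mul_assoc]; gcongr; exact real_inner_le_norm _ _
      _ ≤ 0 := by
          rw [sub_nonpos]; exact mul_le_mul_of_nonneg_right hstep (norm_nonneg d)
  have hanti : AntitoneOn g (Set.Ici 0) :=
    antitoneOn_of_hasDerivWithinAt_nonpos (convex_Ici 0)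
      (fun t _ => (hg t).continuousAt.continuousWithinAt)
      (fun t _ => (hg t).hasDerivWithinAt) hg'_nonpos
  have h01 : g 1 ≤ g 0 := hanti Set.self_mem_Ici (Set.mem_Ici.2 zero_le_one) zero_le_one
  simp only [g, d, one_smul, zero_smul, add_zero, add_sub_cancel] at h01
  linarith

/-- Closed form of the projection of `u` onto the half-space `{d | ⟪h, d⟫ ≤ -b}`. -/
noncomputable def projHalfSpace (h : E) (b : ℝ) (u : E) : E :=
  u - (max 0 ((⟪h, u⟫ + b) / ‖h‖ ^ 2)) • h

theorem inner_projHalfSpace_le {h : E} (hh : h ≠ 0) (b : ℝ) (u : E) :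
    ⟪h, projHalfSpace h b u⟫ ≤ -b := by
  have hpos : 0 < ‖h‖ ^ 2 := by positivity
  have hcoef : ⟪h, u⟫ + b ≤ max 0 ((⟪h, u⟫ + b) / ‖h‖ ^ 2) * ‖h‖ ^ 2 :=
    (div_le_iff₀ hpos).1 (le_max_right _ _)
  rw [projHalfSpace, inner_sub_right, real_inner_smul_right, real_inner_self_eq_norm_sq]
  linarith

end

theorem halypo_theorem1_projected_descent_general
    {E : Type*} [NormedAddCommGroup E] [InnerProductSpace ℝ E]
    (V : E → ℝ) (V' : E → E) (L : ℝ)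
    (hdiff : ∀ θ : E, HasFDerivAt V (InnerProductSpace.toDualMap ℝ E (V' θ)) θ)
    (hlip : ∀ θ₁ θ₂ : E, ‖V' θ₁ - V' θ₂‖ ≤ L * ‖θ₁ - θ₂‖)
    (σ : ℝ) (η : ℝ) (hη : 0 ≤ η) (u : E) (θ : E)
    (hh : V' θ ≠ 0) :
    V (θ + η • (u - (max 0 ((⟪V' θ, u⟫ + σ * V θ) / ‖V' θ‖ ^ 2)) • V' θ)) ≤
      V θ - η * σ * V θ +
        (L * η ^ 2 / 2) *
          ‖u - (max 0 ((⟪V' θ, u⟫ + σ * V θ) / ‖V' θ‖ ^ 2)) • V' θ‖ ^ 2 := by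
  change V (θ + η • projHalfSpace (V' θ) (σ * V θ) u) ≤
    V θ - η * σ * V θ + (L * η ^ 2 / 2) * ‖projHalfSpace (V' θ) (σ * V θ) u‖ ^ 2
  set d := projHalfSpace (V' θ) (σ * V θ) u
  have hsmooth := le_add_inner_add_half_mul_norm_sq hdiff (fun z => hlip z θ) (θ + η • d)
  rw [add_sub_cancel_left, real_inner_smul_right, norm_smul, mul_pow, Real.norm_eq_abs,
    sq_abs] at hsmooth
  have hdescent : η * ⟪V' θ, d⟫ ≤ η * -(σ * V θ) :=
    mul_le_mul_of_nonneg_left (inner_projHalfSpace_le hh (σ * V θ) u) hη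
  linarith

/-- Theorem 1 with the explicit HALyPO projection: with `h := ∇V(θ) ≠ 0` and
`d* := u - (max 0 ((⟪h,u⟫ + σ·V(θ))/‖h‖²)) • h`, the update `θ' = θ + η • d*`
satisfies the descent inequality
`V(θ') ≤ V(θ) - η·σ·V(θ) + (L·η²/2)·‖d*‖²`. -/
theorem halypo_theorem1_projected_descent
    {E : Type*} [NormedAddCommGroup E] [InnerProductSpace ℝ E]
    (V : E → ℝ) (V' : E → E) (L : ℝ)
    (hdiff : ∀ θ : E, HasFDerivAt V (InnerProductSpace.toDualMap ℝ E (V' θ)) θ)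
    (hlip : ∀ θ₁ θ₂ : E, ‖V' θ₁ - V' θ₂‖ ≤ L * ‖θ₁ - θ₂‖)
    (σ : ℝ) (hσ : 0 < σ) (η : ℝ) (hη : 0 ≤ η) (u : E) (θ : E)
    (hh : V' θ ≠ 0) :
    V (θ + η • (u - (max 0 ((⟪V' θ, u⟫ + σ * V θ) / ‖V' θ‖ ^ 2)) • V' θ)) ≤
      V θ - η * σ * V θ +
        (L * η ^ 2 / 2) *
          ‖u - (max 0 ((⟪V' θ, u⟫ + σ * V θ) / ‖V' θ‖ ^ 2)) • V' θ‖ ^ 2 :=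
  halypo_theorem1_projected_descent_general V V' L hdiff hlip σ η hη u θ hh
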